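/- In the autonomous robot PIIS, the sensor invariant |s − p| ≤ 1 holds in every reachable non-initial state of the template agent, and in the initial state s = p = 0; consequently if the halting condition s ≥ 3 triggers then p ≥ 2, i.e., the robot's position is in the goal region at halting time (positions {2,3,4}) given halting occurs as soon as s ≥ 3. -/
import Mathlib


/-- A template state of the autonomous robot: position `p`, sensor value
`s`, halted flag, and moved flag. -/
structure RState where
  p : ℕ
  s : ℕ
  halted : Bool
  moved : Bool
deriving DecidableEq

/-- The initial state `(0, 0, ⊥, ⊥)`. -/
def RInit : RState := ⟨0, 0, false, false⟩

/-- The transitions of the robot (protocol and evolution combined): the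
`null` actions (enabled when `p < 7`, `s < 3`, not halted, not moved) move
the robot one position forward and set the sensor to the new position or to
the new position plus or minus one; `n_s` (enabled when moved) resets the
moved flag; `halt` (enabled when the sensor reading is at least `3`, not
halted, not moved) halts the robot. -/
inductive RStep : RState → RState → Prop where
  | null {p s : ℕ} : p < 7 → s < 3 →
      RStep ⟨p, s, false, false⟩ ⟨p + 1, p + 1, false, true⟩
  | nullPlus {p s : ℕ} : p < 7 → s < 3 →
      RStep ⟨p, s, false, false⟩ ⟨p + 1, p + 2, false, true⟩
  | nullMinus {p s : ℕ} : p < 7 → s < 3 →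
      RStep ⟨p, s, false, false⟩ ⟨p + 1, p, false, true⟩
  | nextStep {p s : ℕ} :
      RStep ⟨p, s, false, true⟩ ⟨p, s, false, false⟩
  | halt {p s : ℕ} : 3 ≤ s →
      RStep ⟨p, s, false, false⟩ ⟨p, s, true, true⟩

/-- Reachability of a robot state from the initial state. -/
def RReach (x : RState) : Prop := Relation.ReflTransGen RStep RInit x

lemma robot_inv : ∀ x, RReach x →
    x.s ≤ x.p + 1 ∧ x.p ≤ x.s + 1 ∧ (3 ≤ x.s → x.p ≤ 4) := by
  intro x hx
  induction hx with
  | refl => simp [RInit]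
  | tail _ hstep ih =>
    cases hstep <;> simp_all <;> omega

/-- Sensor invariant of the autonomous robot: in the initial state
`s = p = 0`; in every reachable non-initial state the sensor value differs
from the position by at most `1` (`|s − p| ≤ 1`); consequently, in every
reachable state where the halting condition `s ≥ 3` triggers, the position
satisfies `p ≥ 2`, i.e. the robot is in the goal region `{2,3,4}` at halting
time. -/
theorem robot_sensor_invariant :
    (RInit.s = 0 ∧ RInit.p = 0) ∧
    (∀ x, RReach x → x ≠ RInit → x.s ≤ x.p + 1 ∧ x.p ≤ x.s + 1) ∧
    (∀ x, RReach x → 3 ≤ x.s → 2 ≤ x.p ∧ x.p ≤ 4) := by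
  refine ⟨⟨rfl, rfl⟩, ?_, ?_⟩
  · intro x hx _
    have := robot_inv x hx
    exact ⟨this.1, this.2.1⟩
  · intro x hx h3
    have := robot_inv x hx
    omega
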